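/- arXiv:2307.09736 — 6 statements merged into one kernel-verified Lean document; each statement's English description precedes it below -/
import Mathlib

section
/- Let G be a strongly regular graph with parameters (n,k,λ,μ), let H be a symmetric [α]-Hadamard matrix of order ζ ≥ 2 (with 0 ≤ α ≤ ζ), and let θ = max{k/2, λ, μ, (n−k−1)/2, n−2−2k+μ, n−2k+λ}. Then n+1 ≤ M_ζ(K_{2, θ(ζ+α)+1}; 2), i.e., there exists a 2-coloring of the edges of the complete multipartite graph K_{n×ζ} with no monochromatic copy of the complete bipartite graph K_{2, θ(ζ+α)+1}. -/
open Finset Matrix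

/-- The complete multipartite graph `K_{c×s}` with `c` partite sets, each of size `s`,
on the vertex set `Fin c × Fin s`. -/
def multiK (c s : ℕ) : SimpleGraph (Fin c × Fin s) where
  Adj v w := v.1 ≠ w.1
  symm := ⟨fun _ _ h => Ne.symm h⟩
  loopless := ⟨fun _ h => h rfl⟩

/-- The symmetric edge `k`-coloring `C` of the graph `G` contains a monochromatic copy of the
complete bipartite graph `K_{2,n}` in color `i`: there are two distinct vertices `a b` and a
set `S` of `n` further vertices all joined to both `a` and `b` by edges of color `i`. -/
def HasMonoK2 {V : Type*} (G : SimpleGraph V) {k : ℕ}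
    (C : V → V → Fin k) (i : Fin k) (n : ℕ) : Prop :=
  ∃ (a b : V) (S : Finset V), a ≠ b ∧ a ∉ S ∧ b ∉ S ∧ S.card = n ∧
    ∀ v ∈ S, G.Adj a v ∧ G.Adj b v ∧ C a v = i ∧ C b v = i

/-- Every symmetric `k`-coloring of the edges of `K_{c×s}` contains a monochromatic copy of
`K_{2, ns i}` in some color `i`. -/
def ArrowsVec (c s k : ℕ) (ns : Fin k → ℕ) : Prop :=
  ∀ C : (Fin c × Fin s) → (Fin c × Fin s) → Fin k,
    (∀ v w, C v w = C w v) → ∃ i : Fin k, HasMonoK2 (multiK c s) C i (ns i)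

/-- Every symmetric `k`-coloring of the edges of `K_{c×s}` contains a monochromatic `K_{2,n}`. -/
def Arrows (c s n k : ℕ) : Prop := ArrowsVec c s k (fun _ => n)

/-- The set multipartite Ramsey number `M_s(K_{2,n}; k)`: the smallest positive integer `c` such
that every `k`-coloring of the edges of `K_{c×s}` contains a monochromatic `K_{2,n}`. -/
noncomputable def setRamsey (s n k : ℕ) : ℕ := sInf {c : ℕ | 0 < c ∧ Arrows c s n k}

/-- The size multipartite Ramsey number `m_c(K_{2,n}; k)`: the smallest positive integer `s` such
that every `k`-coloring of the edges of `K_{c×s}` contains a monochromatic `K_{2,n}`. -/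
noncomputable def sizeRamsey (c n k : ℕ) : ℕ := sInf {s : ℕ | 0 < s ∧ Arrows c s n k}

/-- The size multipartite Ramsey number `m_c(K_{2,n₁},…,K_{2,n_k})`. -/
noncomputable def sizeRamseyVec (c k : ℕ) (ns : Fin k → ℕ) : ℕ :=
  sInf {s : ℕ | 0 < s ∧ ArrowsVec c s k ns}

/-- All entries of the matrix `H` are `1` or `-1`. -/
def PMOne {ι : Type*} (H : Matrix ι ι ℤ) : Prop := ∀ i j, H i j = 1 ∨ H i j = -1

/-- `H` is an `[α]`-Hadamard matrix: a square `±1` matrix such that `α` is an upper bound for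
`|(H * Hᵀ) i j|` over all pairs `i ≠ j`. -/
def IsBHadamard {ι : Type*} [Fintype ι] (α : ℕ) (H : Matrix ι ι ℤ) : Prop :=
  PMOne H ∧ ∀ i j, i ≠ j → |(H * Hᵀ) i j| ≤ (α : ℤ)

/-- `H` is an `α`-Hadamard matrix: a square `±1` matrix such that `α` is the maximum of
`|(H * Hᵀ) i j|` over all pairs `i ≠ j`. -/
def IsEHadamard {ι : Type*} [Fintype ι] (α : ℕ) (H : Matrix ι ι ℤ) : Prop :=
  IsBHadamard α H ∧ ∃ i j, i ≠ j ∧ |(H * Hᵀ) i j| = (α : ℤ)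

/-- `H` is a Hadamard matrix: a square `±1` matrix with `H * Hᵀ = ζ • 1`. -/
def IsHadamard {ι : Type*} [Fintype ι] [DecidableEq ι] (H : Matrix ι ι ℤ) : Prop :=
  PMOne H ∧ H * Hᵀ = (Fintype.card ι : ℤ) • (1 : Matrix ι ι ℤ)

/-!
Index the parts of `K_{n×ζ}` by the vertices of `G` and colour the edge `(x, p)(y, q)` by the sign
`ε(x, y) · H p q`, where `ε(x, y)` is `1` if `x ~ y` and `-1` otherwise. If `(u, i)` and `(v, j)`
are both joined to `(w, t)` in colour `s`, then `ε(u, w) = s H i t` and `ε(v, w) = s H j t`, so a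
monochromatic `K_{2,m}` gives `m ≤ ∑_t q(s H i t, s H j t)`, where `q(x, y)` counts the vertices
`w ∉ {u, v}` with `ε(u, w) = x` and `ε(v, w) = y`.

If `i = j` only diagonal values occur: `q(1,1)` is `λ` or `μ` and `q(-1,-1)` is the same count in
`Gᶜ`, so both are at most `θ` and `m ≤ ζθ`. If `i ≠ j`, rows `i` and `j` of `H` agree in at most
`(ζ+α)/2` columns and disagree in at most `(ζ+α)/2`, while a diagonal plus an antidiagonal value of
`q` is bounded by a degree of `G` or of `Gᶜ`, hence by `2θ`; so again `m ≤ θ(ζ+α)`.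
-/

theorem HasMonoK2.of_hom {V W : Type*} {G : SimpleGraph V} {G' : SimpleGraph W} {k : ℕ}
    {C : W → W → Fin k} {i : Fin k} {m : ℕ} (φ : G →g G') (hφ : Function.Injective φ)
    (h : HasMonoK2 G (fun a b => C (φ a) (φ b)) i m) : HasMonoK2 G' C i m := by
  obtain ⟨a, b, S, hab, haS, hbS, hcard, hS⟩ := h
  refine ⟨φ a, φ b, S.map ⟨φ, hφ⟩, hφ.ne hab, ?_, ?_, by simp [hcard], ?_⟩
  · simpa [hφ.eq_iff] using haS
  · simpa [hφ.eq_iff] using hbS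
  · simp only [mem_map, Function.Embedding.coeFn_mk, forall_exists_index, and_imp]
    rintro _ w hw rfl
    obtain ⟨haw, hbw, hCa, hCb⟩ := hS w hw
    exact ⟨φ.map_adj haw, φ.map_adj hbw, hCa, hCb⟩

theorem Arrows.mono {c c' s m k : ℕ} (hc : c ≤ c') (h : Arrows c s m k) : Arrows c' s m k := by
  intro C hC
  let φ : multiK c s →g multiK c' s :=
    ⟨fun p => (Fin.castLE hc p.1, p.2), fun hpq => (Fin.castLE_injective hc).ne hpq⟩
  have hφ : Function.Injective φ := fun p q hpq =>
    Prod.ext (Fin.castLE_injective hc (congrArg Prod.fst hpq)) (congrArg Prod.snd hpq :)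
  obtain ⟨i, hi⟩ := h (fun p q => C (φ p) (φ q)) (fun p q => hC _ _)
  exact ⟨i, hi.of_hom φ hφ⟩

theorem le_setRamsey_of_coloring {n s m k : ℕ} (C : Fin n × Fin s → Fin n × Fin s → Fin k)
    (hC : ∀ v w, C v w = C w v) (hno : ∀ i, ¬ HasMonoK2 (multiK n s) C i m)
    (harrows : ∃ c, 0 < c ∧ Arrows c s m k) : n + 1 ≤ setRamsey s m k := by
  refine le_csInf harrows fun c ⟨_, hc⟩ => ?_
  by_contra! hcn
  obtain ⟨i, hi⟩ := hc.mono (Nat.le_of_lt_succ hcn) C hC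
  exact hno i hi

section Pigeonhole
variable {α : Type*}

theorem exists_monochromatic_star [DecidableEq α] (f : α → α → Fin 2) {X : Finset α}
    {N : ℕ} (hX : 2 * N + 1 ≤ #X) :
    ∃ v ∈ X, ∃ d, ∃ Y ⊆ X.erase v, N ≤ #Y ∧ ∀ y ∈ Y, f v y = d := by
  obtain ⟨v, hv⟩ : X.Nonempty := card_pos.1 (by omega)
  have hsplit := card_filter_add_card_filter_not (s := X.erase v) (fun y => f v y = 0)
  rw [card_erase_of_mem hv] at hsplit
  rcases le_total N #{y ∈ X.erase v | f v y = 0} with h | h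
  · exact ⟨v, hv, 0, _, filter_subset _ _, h, fun y hy => (mem_filter.1 hy).2⟩
  · refine ⟨v, hv, 1, {y ∈ X.erase v | ¬f v y = 0}, filter_subset _ _, by omega,
      fun y hy => Fin.eq_one_of_ne_zero _ (mem_filter.1 hy).2⟩

theorem hasMonoK2_top_of_nested_stars {f : α → α → Fin 2} {d : Fin 2} {m : ℕ} {a b : α}
    {Y Y' : Finset α} (haY : a ∉ Y) (hbY : b ∈ Y) (hbY' : b ∉ Y') (hY' : Y' ⊆ Y)
    (hm : m ≤ #Y') (ha : ∀ y ∈ Y, f a y = d) (hb : ∀ y ∈ Y', f b y = d) :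
    HasMonoK2 ⊤ f d m := by
  obtain ⟨S, hSY', rfl⟩ := exists_subset_card_eq hm
  have hSY := hSY'.trans hY'
  refine ⟨a, b, S, fun h => haY (h ▸ hbY), fun h => haY (hSY h), fun h => hbY' (hSY' h), rfl,
    fun y hy => ⟨?_, ?_, ha y (hSY hy), hb y (hSY' hy)⟩⟩
  · exact fun h => haY (h ▸ hSY hy)
  · exact fun h => hbY' (h ▸ hSY' hy)

-- Three nested monochromatic stars; two of their three colours agree.
theorem exists_hasMonoK2_top [Fintype α] [DecidableEq α] (f : α → α → Fin 2) {m : ℕ}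
    (hα : 8 * m + 7 ≤ Fintype.card α) : ∃ i, HasMonoK2 ⊤ f i m := by
  obtain ⟨v₁, -, d₁, Y₁, hY₁, hm₁, hf₁⟩ :=
    exists_monochromatic_star f (X := univ) (N := 4 * m + 3) (by rw [card_univ]; omega)
  obtain ⟨v₂, hv₂Y₁, d₂, Y₂, hY₂, hm₂, hf₂⟩ :=
    exists_monochromatic_star f (N := 2 * m + 1) (by omega : 2 * (2 * m + 1) + 1 ≤ #Y₁)
  obtain ⟨v₃, hv₃Y₂, d₃, Y₃, hY₃, hm₃, hf₃⟩ :=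
    exists_monochromatic_star f (N := m) (by omega : 2 * m + 1 ≤ #Y₂)
  have hv₁Y₁ : v₁ ∉ Y₁ := fun h => (mem_erase.1 (hY₁ h)).1 rfl
  have hv₂Y₂ : v₂ ∉ Y₂ := fun h => (mem_erase.1 (hY₂ h)).1 rfl
  have hv₃Y₃ : v₃ ∉ Y₃ := fun h => (mem_erase.1 (hY₃ h)).1 rfl
  have hY₂₁ : Y₂ ⊆ Y₁ := hY₂.trans (erase_subset _ _)
  have hY₃₂ : Y₃ ⊆ Y₂ := hY₃.trans (erase_subset _ _)
  obtain rfl | rfl | rfl : d₁ = d₂ ∨ d₁ = d₃ ∨ d₂ = d₃ := by omega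
  · exact ⟨d₁, hasMonoK2_top_of_nested_stars hv₁Y₁ hv₂Y₁ hv₂Y₂ hY₂₁ (by omega) hf₁ hf₂⟩
  · exact ⟨d₁, hasMonoK2_top_of_nested_stars hv₁Y₁ (hY₂₁ hv₃Y₂) hv₃Y₃ (hY₃₂.trans hY₂₁) hm₃
      hf₁ hf₃⟩
  · exact ⟨d₂, hasMonoK2_top_of_nested_stars hv₂Y₂ hv₃Y₂ hv₃Y₃ hY₃₂ hm₃ hf₂ hf₃⟩

end Pigeonhole

-- Supplies an element of the set whose `sInf` is `setRamsey` (and `sInf ∅ = 0` in `ℕ`).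
theorem arrows_of_le {c s m : ℕ} (hs : 0 < s) (hc : 8 * m + 7 ≤ c) : Arrows c s m 2 := by
  intro C _
  let φ : (⊤ : SimpleGraph (Fin c)) →g multiK c s := ⟨fun x => (x, ⟨0, hs⟩), id⟩
  have hφ : Function.Injective φ := fun x y hxy => congrArg Prod.fst hxy
  obtain ⟨i, hi⟩ :=
    exists_hasMonoK2_top (fun x y => C (φ x) (φ y)) (m := m) (by simpa using hc)
  exact ⟨i, hi.of_hom φ hφ⟩

section SignVectors
variable {ι : Type*} [Fintype ι] {a b : ι → ℤ}

theorem sum_mul_eq_card_eq_sub_card_ne (ha : ∀ t, a t = 1 ∨ a t = -1)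
    (hb : ∀ t, b t = 1 ∨ b t = -1) :
    ∑ t, a t * b t = #{t | a t = b t} - #{t | a t ≠ b t} := by
  have hab : ∀ t, a t * b t = if a t = b t then 1 else -1 := fun t => by
    rcases ha t with h | h <;> rcases hb t with h' | h' <;> simp [h, h']
  simp [hab, sum_ite, sub_eq_add_neg]

theorem two_mul_card_le_of_abs_sum_mul_le (ha : ∀ t, a t = 1 ∨ a t = -1)
    (hb : ∀ t, b t = 1 ∨ b t = -1) {α : ℕ} (hα : |∑ t, a t * b t| ≤ α) :
    2 * #{t | a t = b t} ≤ Fintype.card ι + α ∧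
      2 * #{t | a t ≠ b t} ≤ Fintype.card ι + α := by
  have hsplit := card_filter_add_card_filter_not (s := univ) (fun t => a t = b t)
  rw [card_univ] at hsplit
  rw [sum_mul_eq_card_eq_sub_card_ne ha hb, abs_le] at hα
  simp only [ne_eq] at hα ⊢
  omega

theorem sum_le_card_eq_mul_add_card_ne_mul (ha : ∀ t, a t = 1 ∨ a t = -1)
    (hb : ∀ t, b t = 1 ∨ b t = -1) {f : ℤ → ℤ → ℚ} {M₁ M₂ : ℚ}
    (h₁ : ∀ x, x = 1 ∨ x = -1 → f x x ≤ M₁) (h₂ : ∀ x, x = 1 ∨ x = -1 → f x (-x) ≤ M₂) :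
    ∑ t, f (a t) (b t) ≤ #{t | a t = b t} * M₁ + #{t | a t ≠ b t} * M₂ := by
  rw [← sum_filter_add_sum_filter_not univ (fun t => a t = b t)]
  gcongr
  · refine (sum_le_card_nsmul _ _ M₁ fun t ht => ?_).trans_eq (nsmul_eq_mul _ _)
    rw [← (mem_filter.1 ht).2]
    exact h₁ _ (ha t)
  · refine (sum_le_card_nsmul _ _ M₂ fun t ht => ?_).trans_eq (nsmul_eq_mul _ _)
    have hne := (mem_filter.1 ht).2
    have hba : b t = -a t := by
      rcases ha t with h | h <;> rcases hb t with h' | h' <;> simp_all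
    rw [hba]
    exact h₂ _ (ha t)

theorem IsBHadamard.abs_sum_mul_mul_le {α : ℕ} {H : Matrix ι ι ℤ} (hH : IsBHadamard α H)
    {s : ℤ} (hs : s = 1 ∨ s = -1) {i j : ι} (hij : i ≠ j) :
    |∑ t, s * H i t * (s * H j t)| ≤ α := by
  have hss : s * s = 1 := by rcases hs with rfl | rfl <;> norm_num
  calc |∑ t, s * H i t * (s * H j t)| = |(H * Hᵀ) i j| := by
        simp only [Matrix.mul_apply, Matrix.transpose_apply]
        congr 1
        refine sum_congr rfl fun t _ => ?_
        linear_combination H i t * H j t * hss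
    _ ≤ α := hH.2 i j hij

end SignVectors

namespace SimpleGraph
variable {V : Type*} (G : SimpleGraph V) [DecidableRel G.Adj]

def adjSign (x y : V) : ℤ := if G.Adj x y then 1 else -1

def signCount [Fintype V] [DecidableEq V] (u v : V) (x y : ℤ) : ℕ :=
  #{w | w ≠ u ∧ w ≠ v ∧ G.adjSign u w = x ∧ G.adjSign v w = y}

variable {G}

theorem adjSign_comm (x y : V) : G.adjSign x y = G.adjSign y x := by
  simp only [adjSign, G.adj_comm]

@[simp]
theorem adjSign_eq_one_iff {x y : V} : G.adjSign x y = 1 ↔ G.Adj x y := by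
  unfold adjSign; split_ifs <;> simp_all

theorem adjSign_eq_one_or (x y : V) : G.adjSign x y = 1 ∨ G.adjSign x y = -1 := by
  unfold adjSign; split_ifs <;> simp

theorem adjSign_compl [DecidableEq V] {x y : V} (h : x ≠ y) :
    Gᶜ.adjSign x y = -G.adjSign x y := by
  simp only [adjSign, compl_adj, h, ne_eq, not_false_eq_true, true_and]
  split_ifs <;> simp

variable [Fintype V] [DecidableEq V]

theorem signCount_comm (u v : V) (x y : ℤ) : G.signCount u v x y = G.signCount v u y x := by
  refine congrArg card (Finset.ext fun w => ?_)
  simp only [mem_filter, mem_univ, true_and]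
  tauto

theorem signCount_compl (u v : V) (x y : ℤ) :
    Gᶜ.signCount u v x y = G.signCount u v (-x) (-y) := by
  refine congrArg card (Finset.ext fun w => ?_)
  simp only [mem_filter, mem_univ, true_and]
  constructor
  all_goals
    rintro ⟨hu, hv, hux, hvy⟩
    rw [adjSign_compl (Ne.symm hu), adjSign_compl (Ne.symm hv)] at *
    exact ⟨hu, hv, by omega, by omega⟩

theorem signCount_one_one (u v : V) :
    G.signCount u v 1 1 = Fintype.card (G.commonNeighbors u v) := by
  rw [← Set.toFinset_card]
  refine congrArg card (Finset.ext fun w => ?_)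
  simp only [mem_filter, mem_univ, true_and, Set.mem_toFinset, mem_commonNeighbors,
    adjSign_eq_one_iff]
  exact ⟨fun h => h.2.2, fun h => ⟨(G.ne_of_adj h.1).symm, (G.ne_of_adj h.2).symm, h⟩⟩

theorem card_adjSign_eq_one (u : V) : #{w | w ≠ u ∧ G.adjSign u w = 1} = G.degree u := by
  rw [← card_neighborFinset_eq_degree]
  refine congrArg card (Finset.ext fun w => ?_)
  simp only [mem_filter, mem_univ, true_and, mem_neighborFinset, adjSign_eq_one_iff]
  exact ⟨fun h => h.2, fun h => ⟨(G.ne_of_adj h).symm, h⟩⟩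

theorem card_adjSign_eq_neg_one (u : V) :
    #{w | w ≠ u ∧ G.adjSign u w = -1} = Gᶜ.degree u := by
  rw [← card_adjSign_eq_one]
  refine congrArg card (Finset.ext fun w => ?_)
  simp only [mem_filter, mem_univ, true_and]
  constructor
  all_goals
    rintro ⟨hw, h⟩
    rw [adjSign_compl (Ne.symm hw)] at *
    exact ⟨hw, by omega⟩

theorem signCount_add_signCount_neg_le_card (u v : V) (x : ℤ) {y : ℤ} (hy : y ≠ 0) :
    G.signCount u v x y + G.signCount u v x (-y) ≤ #{w | w ≠ u ∧ G.adjSign u w = x} := by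
  unfold signCount
  rw [← card_union_of_disjoint]
  · refine card_le_card fun w => ?_
    simp only [mem_union, mem_filter, mem_univ, true_and]
    tauto
  · refine disjoint_filter.2 fun w _ h h' => ?_
    omega

theorem card_le_sum_signCount {ι : Type*} [Fintype ι] {u v : V} {a b : ι → ℤ}
    {S : Finset (V × ι)}
    (hS : ∀ p ∈ S, p.1 ≠ u ∧ p.1 ≠ v ∧ G.adjSign u p.1 = a p.2 ∧ G.adjSign v p.1 = b p.2) :
    #S ≤ ∑ t, G.signCount u v (a t) (b t) := by
  calc #S ≤ #{p : V × ι | p.1 ≠ u ∧ p.1 ≠ v ∧ G.adjSign u p.1 = a p.2 ∧ G.adjSign v p.1 = b p.2} :=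
        card_le_card fun p hp => mem_filter.2 ⟨mem_univ _, hS p hp⟩
    _ = ∑ t, G.signCount u v (a t) (b t) := by
        simp only [card_filter, Fintype.sum_prod_type_right, signCount]

end SimpleGraph

def srgTheta (n k ℓ μ : ℕ) : ℚ :=
  max (max (max ((k : ℚ) / 2) (ℓ : ℚ)) (max ((μ : ℚ)) (((n : ℚ) - k - 1) / 2)))
    (max ((n : ℚ) - 2 - 2 * k + μ) ((n : ℚ) - 2 * k + ℓ))

theorem srgTheta_nonneg (n k ℓ μ : ℕ) : 0 ≤ srgTheta n k ℓ μ :=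
  le_max_of_le_left (le_max_of_le_left (le_max_of_le_left (by positivity)))

namespace SimpleGraph.IsSRGWith
variable {V : Type*} [Fintype V] [DecidableEq V] {G : SimpleGraph V} [DecidableRel G.Adj]
  {n k ℓ μ : ℕ} {u v : V}

theorem signCount_one_one_le (hG : G.IsSRGWith n k ℓ μ) (huv : u ≠ v) :
    G.signCount u v 1 1 ≤ max ℓ μ := by
  rw [signCount_one_one]
  by_cases h : G.Adj u v
  · exact (hG.of_adj u v h).le.trans (le_max_left _ _)
  · exact (hG.of_not_adj huv h).le.trans (le_max_right _ _)

theorem signCount_diag_le (hG : G.IsSRGWith n k ℓ μ) (huv : u ≠ v) {x : ℤ}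
    (hx : x = 1 ∨ x = -1) : (G.signCount u v x x : ℚ) ≤ srgTheta n k ℓ μ := by
  rcases hx with rfl | rfl
  · have h : (G.signCount u v 1 1 : ℚ) ≤ max (ℓ : ℚ) μ := by
      exact_mod_cast hG.signCount_one_one_le huv
    refine h.trans (max_le ?_ ?_) <;> unfold srgTheta <;>
      simp only [le_max_iff, le_refl, true_or, or_true]
  · have h := hG.compl.signCount_one_one_le huv
    rw [signCount_compl] at h
    -- The parameters of `Gᶜ` in `hG.compl` involve truncated subtraction.
    have hz : (G.signCount u v (-1) (-1) : ℤ) ≤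
        max 0 (max ((n : ℤ) - 2 - 2 * k + μ) ((n : ℤ) - 2 * k + ℓ)) := by
      omega
    have hq : (G.signCount u v (-1) (-1) : ℚ) ≤
        max 0 (max ((n : ℚ) - 2 - 2 * k + μ) ((n : ℚ) - 2 * k + ℓ)) := by
      exact_mod_cast hz
    exact hq.trans (max_le (srgTheta_nonneg n k ℓ μ) (le_max_right _ _))

theorem card_adjSign_le (hG : G.IsSRGWith n k ℓ μ) (u : V) {x : ℤ} (hx : x = 1 ∨ x = -1) :
    #{w | w ≠ u ∧ G.adjSign u w = x} ≤ max k (n - k - 1) := by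
  rcases hx with rfl | rfl
  · rw [card_adjSign_eq_one, hG.regular.degree_eq]
    exact le_max_left _ _
  · rw [card_adjSign_eq_neg_one, hG.compl.regular.degree_eq]
    exact le_max_right _ _

theorem signCount_add_signCount_neg_le (hG : G.IsSRGWith n k ℓ μ) (u v : V) {x y : ℤ}
    (hx : x = 1 ∨ x = -1) (hy : y ≠ 0) :
    (G.signCount u v x y + G.signCount u v x (-y) : ℚ) ≤ 2 * srgTheta n k ℓ μ := by
  have h := (signCount_add_signCount_neg_le_card u v x hy).trans (hG.card_adjSign_le u hx)
  have hz : (G.signCount u v x y + G.signCount u v x (-y) : ℤ) ≤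
      max (k : ℤ) (max 0 ((n : ℤ) - k - 1)) := by
    omega
  have hq : (G.signCount u v x y + G.signCount u v x (-y) : ℚ) ≤
      max (k : ℚ) (max 0 ((n : ℚ) - k - 1)) := by
    exact_mod_cast hz
  have hk : (k : ℚ) / 2 ≤ srgTheta n k ℓ μ := by
    unfold srgTheta; simp only [le_max_iff, le_refl, true_or]
  have hn : ((n : ℚ) - k - 1) / 2 ≤ srgTheta n k ℓ μ := by
    unfold srgTheta; simp only [le_max_iff, le_refl, true_or, or_true]
  have hθ := srgTheta_nonneg n k ℓ μ
  exact hq.trans (max_le (by linarith) (max_le (by linarith) (by linarith)))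

theorem signCount_diag_add_signCount_antidiag_le (hG : G.IsSRGWith n k ℓ μ) (u v : V)
    {x y : ℤ} (hx : x = 1 ∨ x = -1) (hy : y = 1 ∨ y = -1) :
    (G.signCount u v x x + G.signCount u v y (-y) : ℚ) ≤ 2 * srgTheta n k ℓ μ := by
  rcases hx with rfl | rfl <;> rcases hy with rfl | rfl
  · exact hG.signCount_add_signCount_neg_le u v (Or.inl rfl) one_ne_zero
  · rw [signCount_comm u v, signCount_comm u v (-1)]
    simpa using hG.signCount_add_signCount_neg_le v u (Or.inl rfl) one_ne_zero
  · rw [signCount_comm u v, signCount_comm u v 1]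
    simpa using hG.signCount_add_signCount_neg_le v u (Or.inr rfl) (neg_ne_zero.2 one_ne_zero)
  · simpa [add_comm] using hG.signCount_add_signCount_neg_le u v (Or.inr rfl) one_ne_zero

section Sums
variable {ι : Type*} [Fintype ι] {a b : ι → ℤ}

theorem sum_signCount_diag_le (hG : G.IsSRGWith n k ℓ μ) (huv : u ≠ v)
    (ha : ∀ t, a t = 1 ∨ a t = -1) :
    ∑ t, (G.signCount u v (a t) (a t) : ℚ) ≤ Fintype.card ι * srgTheta n k ℓ μ := by
  rw [← nsmul_eq_mul]
  exact sum_le_card_nsmul _ _ _ fun t _ => hG.signCount_diag_le huv (ha t)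

theorem sum_signCount_le (hG : G.IsSRGWith n k ℓ μ) (ha : ∀ t, a t = 1 ∨ a t = -1)
    (hb : ∀ t, b t = 1 ∨ b t = -1) {α : ℕ} (hα : |∑ t, a t * b t| ≤ α) :
    ∑ t, (G.signCount u v (a t) (b t) : ℚ) ≤ srgTheta n k ℓ μ * (Fintype.card ι + α) := by
  set q : ℤ → ℤ → ℚ := fun x y => G.signCount u v x y
  set M₁ := max (q 1 1) (q (-1) (-1))
  set M₂ := max (q 1 (-1)) (q (-1) 1)
  have h₁ : ∀ x, x = 1 ∨ x = -1 → q x x ≤ M₁ := by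
    rintro x (rfl | rfl)
    exacts [le_max_left _ _, le_max_right _ _]
  have h₂ : ∀ x, x = 1 ∨ x = -1 → q x (-x) ≤ M₂ := by
    rintro x (rfl | rfl)
    exacts [le_max_left _ _, by simp [M₂]]
  have hM : M₁ + M₂ ≤ 2 * srgTheta n k ℓ μ := by
    rcases max_choice (q 1 1) (q (-1) (-1)) with e₁ | e₁ <;>
      rcases max_choice (q 1 (-1)) (q (-1) 1) with e₂ | e₂ <;>
      simp only [M₁, M₂, e₁, e₂]
    · exact hG.signCount_diag_add_signCount_antidiag_le u v (.inl rfl) (.inl rfl)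
    · simpa using hG.signCount_diag_add_signCount_antidiag_le u v (.inl rfl) (.inr rfl)
    · exact hG.signCount_diag_add_signCount_antidiag_le u v (.inr rfl) (.inl rfl)
    · simpa using hG.signCount_diag_add_signCount_antidiag_le u v (.inr rfl) (.inr rfl)
  obtain ⟨hE, hN⟩ := two_mul_card_le_of_abs_sum_mul_le ha hb hα
  have hE' : (#{t | a t = b t} : ℚ) ≤ (Fintype.card ι + α) / 2 := by
    rw [le_div_iff₀ two_pos, mul_comm]; exact_mod_cast hE
  have hN' : (#{t | a t ≠ b t} : ℚ) ≤ (Fintype.card ι + α) / 2 := by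
    rw [le_div_iff₀ two_pos, mul_comm]; exact_mod_cast hN
  have hM₁ : 0 ≤ M₁ := le_max_of_le_left (Nat.cast_nonneg _)
  have hM₂ : 0 ≤ M₂ := le_max_of_le_left (Nat.cast_nonneg _)
  calc ∑ t, q (a t) (b t) ≤ #{t | a t = b t} * M₁ + #{t | a t ≠ b t} * M₂ :=
        sum_le_card_eq_mul_add_card_ne_mul ha hb h₁ h₂
    _ ≤ (Fintype.card ι + α) / 2 * M₁ + (Fintype.card ι + α) / 2 * M₂ := by gcongr
    _ = (Fintype.card ι + α) / 2 * (M₁ + M₂) := by ring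
    _ ≤ (Fintype.card ι + α) / 2 * (2 * srgTheta n k ℓ μ) := by gcongr
    _ = srgTheta n k ℓ μ * (Fintype.card ι + α) := by ring

end Sums

end SimpleGraph.IsSRGWith

section ProductColoring
variable {V ι : Type*} (G : SimpleGraph V) [DecidableRel G.Adj] (H : Matrix ι ι ℤ)

def prodColoring (p q : V × ι) : Fin 2 :=
  if G.adjSign p.1 q.1 * H p.2 q.2 = 1 then 0 else 1

variable {G H}

theorem prodColoring_comm (hH : H.IsSymm) (p q : V × ι) :
    prodColoring G H p q = prodColoring G H q p := by
  simp only [prodColoring, SimpleGraph.adjSign_comm p.1, hH.apply p.2]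

theorem exists_sign_prodColoring_eq_iff (hH : PMOne H) (c : Fin 2) :
    ∃ s : ℤ, (s = 1 ∨ s = -1) ∧
      ∀ p q, prodColoring G H p q = c ↔ G.adjSign p.1 q.1 = s * H p.2 q.2 := by
  fin_cases c
  · refine ⟨1, Or.inl rfl, fun p q => ?_⟩
    rcases G.adjSign_eq_one_or p.1 q.1 with h | h <;> rcases hH p.2 q.2 with h' | h' <;>
      simp [prodColoring, h, h']
  · refine ⟨-1, Or.inr rfl, fun p q => ?_⟩
    rcases G.adjSign_eq_one_or p.1 q.1 with h | h <;> rcases hH p.2 q.2 with h' | h' <;>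
      simp [prodColoring, h, h']

theorem not_hasMonoK2_prodColoring [Fintype V] [DecidableEq V] [Fintype ι] {n k ℓ μ α : ℕ}
    (hG : G.IsSRGWith n k ℓ μ) (hH : IsBHadamard α H) (c : Fin 2) {m : ℕ}
    (hm : srgTheta n k ℓ μ * (Fintype.card ι + α) < m) :
    ¬ HasMonoK2 ((⊤ : SimpleGraph V).comap Prod.fst) (prodColoring G H) c m := by
  obtain ⟨s, hs, hc⟩ := exists_sign_prodColoring_eq_iff (G := G) hH.1 c
  have hsH : ∀ i t, s * H i t = 1 ∨ s * H i t = -1 := fun i t => by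
    rcases hs with rfl | rfl <;> rcases hH.1 i t with h | h <;> simp [h]
  rintro ⟨⟨u, i⟩, ⟨v, j⟩, S, hab, -, -, rfl, hS⟩
  have hcard : #S ≤ ∑ t, G.signCount u v (s * H i t) (s * H j t) :=
    SimpleGraph.card_le_sum_signCount fun p hp => by
      obtain ⟨hup, hvp, hcu, hcv⟩ := hS p hp
      exact ⟨Ne.symm hup, Ne.symm hvp, (hc _ _).1 hcu, (hc _ _).1 hcv⟩
  have hsum : ∑ t, (G.signCount u v (s * H i t) (s * H j t) : ℚ) ≤
      srgTheta n k ℓ μ * (Fintype.card ι + α) := by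
    by_cases hij : i = j
    · subst hij
      have huv : u ≠ v := fun h => hab (h ▸ rfl)
      refine (hG.sum_signCount_diag_le huv (hsH i)).trans ?_
      rw [mul_comm]
      exact mul_le_mul_of_nonneg_left (le_add_of_nonneg_right (Nat.cast_nonneg α))
        (srgTheta_nonneg n k ℓ μ)
    · exact hG.sum_signCount_le (hsH i) (hsH j) (hH.abs_sum_mul_mul_le hs hij)
  have : (#S : ℚ) ≤ ∑ t, (G.signCount u v (s * H i t) (s * H j t) : ℚ) := by exact_mod_cast hcard
  linarith

end ProductColoring

theorem statement0_general {V : Type*} [Fintype V] (G : SimpleGraph V) [DecidableRel G.Adj]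
    (n k ℓ μ : ℕ) (hG : G.IsSRGWith n k ℓ μ)
    (ζ α : ℕ) (hζ : 2 ≤ ζ)
    (H : Matrix (Fin ζ) (Fin ζ) ℤ) (hH : IsBHadamard α H) (hHsymm : H.IsSymm)
    (θ : ℚ)
    (hθ : θ = max (max (max ((k : ℚ) / 2) (ℓ : ℚ)) (max ((μ : ℚ)) (((n : ℚ) - k - 1) / 2)))
      (max ((n : ℚ) - 2 - 2 * k + μ) ((n : ℚ) - 2 * k + ℓ)))
    (T : ℕ) (hT : (T : ℚ) = θ * (ζ + α)) :
    n + 1 ≤ setRamsey ζ (T + 1) 2 ∧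
    ∃ C : (Fin n × Fin ζ) → (Fin n × Fin ζ) → Fin 2,
      (∀ v w, C v w = C w v) ∧ ∀ i : Fin 2, ¬ HasMonoK2 (multiK n ζ) C i (T + 1) := by
  classical
  let e : V ≃ Fin n := Fintype.equivFinOfCardEq hG.card
  let φ : multiK n ζ →g (⊤ : SimpleGraph V).comap Prod.fst :=
    ⟨fun p => (e.symm p.1, p.2), fun hpq => e.symm.injective.ne hpq⟩
  have hφ : Function.Injective φ := fun p q hpq =>
    Prod.ext (e.symm.injective (congrArg Prod.fst hpq)) (congrArg Prod.snd hpq :)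
  let C := fun p q => prodColoring G H (φ p) (φ q)
  have hC : ∀ p q, C p q = C q p := fun p q => prodColoring_comm hHsymm _ _
  have hm : srgTheta n k ℓ μ * (Fintype.card (Fin ζ) + α) < (T + 1 : ℕ) := by
    rw [Fintype.card_fin, show srgTheta n k ℓ μ = θ from hθ.symm, ← hT]
    push_cast
    linarith
  have hno : ∀ i, ¬ HasMonoK2 (multiK n ζ) C i (T + 1) := fun i h =>
    not_hasMonoK2_prodColoring hG hH i hm (h.of_hom φ hφ)
  exact ⟨le_setRamsey_of_coloring C hC hno ⟨_, by omega, arrows_of_le (by omega) le_rfl⟩,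
    C, hC, hno⟩

/-- **Theorem (lower bound for the set multipartite Ramsey number).**
If `G` is a strongly regular graph with parameters `(n,k,ℓ,μ)`, `H` is a symmetric
`[α]`-Hadamard matrix of order `ζ ≥ 2` (with `α ≤ ζ`), and
`θ = max {k/2, ℓ, μ, (n-k-1)/2, n-2-2k+μ, n-2k+ℓ}` (taken in `ℚ`), then
`n + 1 ≤ M_ζ(K_{2, θ(ζ+α)+1}; 2)`, i.e. there is a 2-coloring of the edges of `K_{n×ζ}`
with no monochromatic copy of `K_{2, θ(ζ+α)+1}`. -/
theorem statement0 {V : Type*} [Fintype V] (G : SimpleGraph V) [DecidableRel G.Adj]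
    (n k ℓ μ : ℕ) (hG : G.IsSRGWith n k ℓ μ)
    (ζ α : ℕ) (hζ : 2 ≤ ζ) (hα : α ≤ ζ)
    (H : Matrix (Fin ζ) (Fin ζ) ℤ) (hH : IsBHadamard α H) (hHsymm : H.IsSymm)
    (θ : ℚ)
    (hθ : θ = max (max (max ((k : ℚ) / 2) (ℓ : ℚ)) (max ((μ : ℚ)) (((n : ℚ) - k - 1) / 2)))
      (max ((n : ℚ) - 2 - 2 * k + μ) ((n : ℚ) - 2 * k + ℓ)))
    (T : ℕ) (hT : (T : ℚ) = θ * (ζ + α)) :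
    n + 1 ≤ setRamsey ζ (T + 1) 2 ∧
    ∃ C : (Fin n × Fin ζ) → (Fin n × Fin ζ) → Fin 2,
      (∀ v w, C v w = C w v) ∧ ∀ i : Fin 2, ¬ HasMonoK2 (multiK n ζ) C i (T + 1) :=
  statement0_general G n k ℓ μ hG ζ α hζ H hH hHsymm θ hθ T hT
end

section
/- Let n ≥ 2. Suppose that there exists a strongly regular graph with parameters (4n−3, 2n−2, n−2, n−1) and a symmetric [α]-Hadamard matrix of even order ζ with ζ > (√2+1)(2n−1)(4αn−4α+1). Then M_ζ(K_{2, (ζ+α)(n−1)+1}; 2) = 4n−2. -/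
open Finset Matrix

/-!
Upper bound: `K_{(4n-2)×ζ}` is regular of degree `(4n-3)ζ = 2D`. Count the pairs of equally
coloured edges at a common vertex: by convexity each vertex carries at least `2(D² - D)` of them,
while if no colour class contains `K_{2,M+1}` each ordered pair of distinct vertices is the pair of
ends of at most `2M` of them. Hence `D² - D ≤ (N - 1)M` with `N = (4n-2)ζ`, which fails for
`M = (ζ+α)(n-1)` as soon as `ζ > 2(2n-1)(4α(n-1)+1)`.

Lower bound: for `c ≤ 4n-3` embed the parts of `K_{c×ζ}` into the strongly regular graph `G` and
give the edge `(p,k)(r,l)` the colour recording whether the `G`-adjacency of `p, r` agrees with the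
sign of `H k l`. Per column `l`, two vertices of one part `p` have monochromatic common neighbours
only if their rows of `H` agree in column `l` (which happens in at most `(ζ+α)/2` columns), and
then only `2n-2` of them; two vertices in different parts have at most `n-1`, because sorting
the other vertices of `G` by adjacency to two given ones gives classes of at most `n-1` (the
parameters of `G` are those of its complement).
-/

lemma two_mul_le_add_of_add_eq {d₀ d₁ D : ℕ} (h : d₀ + d₁ = 2 * D) :
    2 * (D * D - D) ≤ (d₀ * d₀ - d₀) + (d₁ * d₁ - d₁) := by
  zify [Nat.le_mul_self D, Nat.le_mul_self d₀, Nat.le_mul_self d₁]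
  nlinarith [sq_nonneg ((d₀ : ℤ) - d₁)]

namespace SimpleGraph

variable {V : Type*} [Fintype V] (G : SimpleGraph V) [DecidableRel G.Adj]
  {k : ℕ} (C : V → V → Fin k)

def colorNeighborFinset (i : Fin k) (v : V) : Finset V := {w ∈ G.neighborFinset v | C v w = i}

variable {G C}

@[simp]
lemma mem_colorNeighborFinset {i : Fin k} {v w : V} :
    w ∈ G.colorNeighborFinset C i v ↔ G.Adj v w ∧ C v w = i := by
  simp [colorNeighborFinset]

lemma mem_colorNeighborFinset_comm (hC : ∀ v w, C v w = C w v) {i : Fin k} {v w : V} :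
    w ∈ G.colorNeighborFinset C i v ↔ v ∈ G.colorNeighborFinset C i w := by
  simp [G.adj_comm v w, hC v w]

lemma card_colorNeighborFinset_add (C : V → V → Fin 2) (v : V) :
    #(G.colorNeighborFinset C 0 v) + #(G.colorNeighborFinset C 1 v) = G.degree v := by
  have h1 : G.colorNeighborFinset C 1 v = {w ∈ G.neighborFinset v | ¬ C v w = 0} :=
    filter_congr fun w _ => by omega
  rw [h1, ← card_neighborFinset_eq_degree]
  exact card_filter_add_card_filter_not _

variable [DecidableEq V]

lemma hasMonoK2_iff {i : Fin k} {m : ℕ} :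
    HasMonoK2 G C i m ↔ ∃ a b, a ≠ b ∧
      m ≤ #(G.colorNeighborFinset C i a ∩ G.colorNeighborFinset C i b) := by
  constructor
  · rintro ⟨a, b, S, hab, -, -, rfl, hS⟩
    refine ⟨a, b, hab, card_le_card fun v hv => ?_⟩
    obtain ⟨ha, hb, hCa, hCb⟩ := hS v hv
    simp [ha, hb, hCa, hCb]
  · rintro ⟨a, b, hab, hm⟩
    obtain ⟨S, hS, rfl⟩ := exists_subset_card_eq hm
    have hSab : ∀ v ∈ S, G.Adj a v ∧ G.Adj b v ∧ C a v = i ∧ C b v = i := fun v hv => by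
      have := hS hv
      simp only [mem_inter, mem_colorNeighborFinset] at this
      tauto
    exact ⟨a, b, S, hab, fun ha => G.irrefl (hSab a ha).1, fun hb => G.irrefl (hSab b hb).2.1,
      rfl, hSab⟩

lemma sum_card_inter_colorNeighborFinset (hC : ∀ v w, C v w = C w v) (i : Fin k) :
    ∑ p ∈ (univ : Finset V).offDiag,
        #(G.colorNeighborFinset C i p.1 ∩ G.colorNeighborFinset C i p.2) =
      ∑ v, #(G.colorNeighborFinset C i v).offDiag := by
  convert sum_card_bipartiteAbove_eq_sum_card_bipartiteBelow
    (s := (univ : Finset V).offDiag) (t := univ)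
    (r := fun p v => v ∈ G.colorNeighborFinset C i p.1 ∧ v ∈ G.colorNeighborFinset C i p.2)
    using 3 with p - v -
  · ext w; simp [bipartiteAbove]
  · ext p
    simp only [mem_offDiag, bipartiteBelow, mem_filter, mem_univ, true_and]
    rw [mem_colorNeighborFinset_comm hC, mem_colorNeighborFinset_comm hC (v := p.2)]
    tauto

theorem mul_self_sub_le_of_card_inter_colorNeighborFinset_le [Nonempty V] {D M : ℕ}
    (hG : G.IsRegularOfDegree (2 * D)) {C : V → V → Fin 2} (hC : ∀ v w, C v w = C w v)
    (hM : ∀ a b, a ≠ b → ∀ i,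
      #(G.colorNeighborFinset C i a ∩ G.colorNeighborFinset C i b) ≤ M) :
    D * D - D ≤ (Fintype.card V - 1) * M := by
  have hlow : #(univ : Finset V) * (2 * (D * D - D)) ≤
      ∑ v, (#(G.colorNeighborFinset C 0 v).offDiag + #(G.colorNeighborFinset C 1 v).offDiag) := by
    rw [← smul_eq_mul]
    refine card_nsmul_le_sum _ _ _ fun v _ => ?_
    simp only [offDiag_card]
    exact two_mul_le_add_of_add_eq ((card_colorNeighborFinset_add C v).trans (hG v))
  have hup : ∑ v, (#(G.colorNeighborFinset C 0 v).offDiag +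
      #(G.colorNeighborFinset C 1 v).offDiag) ≤ #(univ : Finset V).offDiag * (M + M) := by
    rw [sum_add_distrib, ← sum_card_inter_colorNeighborFinset hC,
      ← sum_card_inter_colorNeighborFinset hC, ← sum_add_distrib, ← smul_eq_mul]
    refine sum_le_card_nsmul _ _ _ fun p hp => ?_
    have hne := (mem_offDiag.1 hp).2.2
    exact add_le_add (hM _ _ hne 0) (hM _ _ hne 1)
  rw [offDiag_card, card_univ, ← Nat.mul_sub_one, mul_assoc] at hup
  refine Nat.le_of_mul_le_mul_left ?_ (Fintype.card_pos (α := V))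
  rw [card_univ] at hlow
  linarith

end SimpleGraph

instance (c s : ℕ) : DecidableRel (multiK c s).Adj :=
  fun v w => inferInstanceAs (Decidable (v.1 ≠ w.1))

@[simp]
lemma multiK_adj {c s : ℕ} {v w : Fin c × Fin s} : (multiK c s).Adj v w ↔ v.1 ≠ w.1 :=
  Iff.rfl

lemma multiK_isRegularOfDegree (c s : ℕ) : (multiK c s).IsRegularOfDegree ((c - 1) * s) := by
  intro v
  have : (multiK c s).neighborFinset v = (univ.erase v.1) ×ˢ univ := by
    ext w
    simp [eq_comm]
  rw [← SimpleGraph.card_neighborFinset_eq_degree, this, card_product,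
    card_erase_of_mem (mem_univ _)]
  simp

lemma setRamsey_eq {s m k c : ℕ} (hc : 0 < c) (h : Arrows c s m k)
    (hlt : ∀ c' < c, ¬ Arrows c' s m k) : setRamsey s m k = c :=
  le_antisymm (Nat.sInf_le ⟨hc, h⟩)
    (le_csInf ⟨c, hc, h⟩ fun _ ⟨_, h'⟩ => not_lt.1 fun hlt' => hlt _ hlt' h')

lemma arrows_of_lt {c w M : ℕ}
    (h : (c * (2 * w) - 1) * M < (c - 1) * w * ((c - 1) * w) - (c - 1) * w) :
    Arrows c (2 * w) (M + 1) 2 := by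
  intro C hC
  by_contra! hno
  obtain ⟨hc, hw⟩ : c - 1 ≠ 0 ∧ w ≠ 0 := mul_ne_zero_iff.1 fun h0 => by simp [h0] at h
  have : Nonempty (Fin c × Fin (2 * w)) := ⟨(⟨0, by omega⟩, ⟨0, by omega⟩)⟩
  have hreg : (multiK c (2 * w)).IsRegularOfDegree (2 * ((c - 1) * w)) := by
    convert multiK_isRegularOfDegree c (2 * w) using 1; ring
  have := (multiK c (2 * w)).mul_self_sub_le_of_card_inter_colorNeighborFinset_le hreg hC
    (M := M) fun a b hab i => by
      have := hno i
      rw [SimpleGraph.hasMonoK2_iff] at this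
      push Not at this
      exact Nat.lt_succ_iff.1 (this a b hab)
  simp only [Fintype.card_prod, Fintype.card_fin] at this
  omega

lemma arrows_four_mul_sub_two {n ζ α : ℕ} (hn : 1 ≤ n) (hζ : Even ζ)
    (h : 2 * (2 * n - 1) * (4 * α * (n - 1) + 1) < ζ) :
    Arrows (4 * n - 2) ζ ((ζ + α) * (n - 1) + 1) 2 := by
  obtain ⟨w, rfl⟩ := hζ.two_dvd
  obtain ⟨e, rfl⟩ : ∃ e, n = e + 1 := ⟨n - 1, by omega⟩
  rw [show 4 * (e + 1) - 2 = 4 * e + 2 by omega] at *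
  rw [show 2 * (e + 1) - 1 = 2 * e + 1 by omega, Nat.add_sub_cancel] at *
  apply arrows_of_lt
  have hw : (2 * e + 1) * (4 * α * e + 1) + 1 ≤ w := by rw [mul_assoc] at h; omega
  have hwz : ((2 * e + 1) * (4 * α * e + 1) + 1 : ℤ) ≤ w := by exact_mod_cast hw
  rw [show 4 * e + 2 - 1 = 4 * e + 1 by omega]
  zify [Nat.le_mul_self ((4 * e + 1) * w),
    Nat.mul_pos (by omega : 0 < 4 * e + 2) (by omega : 0 < 2 * w)]
  -- the difference of the two sides is `w * (w - (2e+1)(4αe+1)) + αe`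
  nlinarith [mul_le_mul_of_nonneg_left hwz (Int.natCast_nonneg w),
    mul_nonneg (Int.natCast_nonneg α) (Int.natCast_nonneg e)]

lemma PMOne.eq_iff {ι : Type*} {H : Matrix ι ι ℤ} (hH : PMOne H) (i j k l : ι) :
    H i k = H j l ↔ (H i k = 1 ↔ H j l = 1) := by
  rcases hH i k with h | h <;> rcases hH j l with h' | h' <;> simp [h, h']

lemma IsBHadamard.two_mul_card_eq_le {ι : Type*} [Fintype ι] {α : ℕ} {H : Matrix ι ι ℤ}
    (hH : IsBHadamard α H) {i j : ι} (hij : i ≠ j) :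
    2 * #{k | H i k = H j k} ≤ Fintype.card ι + α := by
  have hterm : ∀ k, H i k * H j k = 2 * (if H i k = H j k then 1 else 0) - 1 := fun k => by
    rcases hH.1 i k with h | h <;> rcases hH.1 j k with h' | h' <;> simp [h, h']
  have hdot : (H * Hᵀ) i j = 2 * #{k | H i k = H j k} - Fintype.card ι := by
    simp only [mul_apply, transpose_apply, hterm, sum_sub_distrib, ← mul_sum, sum_boole]
    simp
  have := hH.2 i j hij
  rw [hdot, abs_le] at this
  omega

namespace SimpleGraph

variable {V : Type*} [Fintype V] [DecidableEq V] {G : SimpleGraph V} [DecidableRel G.Adj]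
  {n : ℕ} {x y : V}

lemma IsSRGWith.compl_of_conference (h : G.IsSRGWith (4 * n - 3) (2 * n - 2) (n - 2) (n - 1))
    (hn : 2 ≤ n) : Gᶜ.IsSRGWith (4 * n - 3) (2 * n - 2) (n - 2) (n - 1) := by
  convert h.compl using 1 <;> omega

lemma card_neighborFinset_inter (x y : V) :
    #(G.neighborFinset x ∩ G.neighborFinset y) = Fintype.card (G.commonNeighbors x y) := by
  rw [← Set.toFinset_card]
  congr 1
  ext u
  simp [mem_commonNeighbors]

lemma IsSRGWith.card_neighborFinset_inter_le
    (h : G.IsSRGWith (4 * n - 3) (2 * n - 2) (n - 2) (n - 1)) (hxy : x ≠ y) :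
    #(G.neighborFinset x ∩ G.neighborFinset y) ≤ n - 1 := by
  rw [card_neighborFinset_inter]
  by_cases hadj : G.Adj x y
  · rw [h.of_adj x y hadj]; omega
  · rw [h.of_not_adj hxy hadj]

lemma IsSRGWith.card_neighborFinset_inter_compl_le
    (h : G.IsSRGWith (4 * n - 3) (2 * n - 2) (n - 2) (n - 1)) (hn : 2 ≤ n) (hxy : x ≠ y) :
    #(G.neighborFinset x ∩ Gᶜ.neighborFinset y) ≤ n - 1 := by
  have hsplit : #(G.neighborFinset x ∩ G.neighborFinset y) +
      #(G.neighborFinset x ∩ Gᶜ.neighborFinset y) = #((G.neighborFinset x).erase y) := by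
    rw [← card_union_of_disjoint]
    · congr 1
      ext u
      simp only [mem_union, mem_inter, mem_neighborFinset, compl_adj, mem_erase]
      grind [SimpleGraph.ne_of_adj]
    · rw [Finset.disjoint_left]
      intro u hu hu'
      simp only [mem_inter, mem_neighborFinset, compl_adj] at hu hu'
      exact hu'.2.2 hu.2
  rw [card_neighborFinset_inter] at hsplit
  by_cases hadj : G.Adj x y
  · rw [h.of_adj x y hadj, card_erase_of_mem (by simpa using hadj), card_neighborFinset_eq_degree,
      h.regular x] at hsplit
    omega
  · rw [h.of_not_adj hxy hadj, erase_eq_of_notMem (by simpa using hadj),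
      card_neighborFinset_eq_degree, h.regular x] at hsplit
    omega

lemma IsSRGWith.card_filter_adj_iff_eq
    (h : G.IsSRGWith (4 * n - 3) (2 * n - 2) (n - 2) (n - 1)) (hn : 2 ≤ n) (x : V)
    (s : Prop) [Decidable s] :
    #{u | u ≠ x ∧ (G.Adj x u ↔ s)} = 2 * n - 2 := by
  by_cases hs : s <;> [
    rw [← h.regular x];
    rw [← (h.compl_of_conference hn).regular x]] <;>
  · rw [← card_neighborFinset_eq_degree]
    congr 1
    ext u
    simp only [mem_filter, mem_univ, true_and, mem_neighborFinset, compl_adj, hs, iff_true,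
      iff_false]
    grind [SimpleGraph.ne_of_adj]

lemma IsSRGWith.card_filter_adj_iff_adj_iff_le
    (h : G.IsSRGWith (4 * n - 3) (2 * n - 2) (n - 2) (n - 1)) (hn : 2 ≤ n) (hxy : x ≠ y)
    (s t : Prop) [Decidable s] [Decidable t] :
    #{u | u ≠ x ∧ u ≠ y ∧ (G.Adj x u ↔ s) ∧ (G.Adj y u ↔ t)} ≤ n - 1 := by
  have hc := h.compl_of_conference hn
  by_cases hs : s <;> by_cases ht : t <;> [
    convert h.card_neighborFinset_inter_le hxy using 2;
    convert h.card_neighborFinset_inter_compl_le hn hxy using 2;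
    convert h.card_neighborFinset_inter_compl_le hn hxy.symm using 2;
    convert hc.card_neighborFinset_inter_le hxy using 2] <;>
  · ext u
    simp only [mem_filter, mem_univ, true_and, mem_inter, mem_neighborFinset, compl_adj, hs, ht,
      iff_true, iff_false]
    grind [SimpleGraph.ne_of_adj]

end SimpleGraph

section Coloring

variable {V : Type*} (G : SimpleGraph V) [DecidableRel G.Adj] {c ζ : ℕ}

def srgHadamardColoring (f : Fin c → V) (H : Matrix (Fin ζ) (Fin ζ) ℤ)
    (v w : Fin c × Fin ζ) : Fin 2 :=
  if (G.Adj (f v.1) (f w.1) ↔ H v.2 w.2 = 1) then 0 else 1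

variable {G}

lemma srgHadamardColoring_comm {f : Fin c → V} {H : Matrix (Fin ζ) (Fin ζ) ℤ} (hH : H.IsSymm)
    (v w : Fin c × Fin ζ) : srgHadamardColoring G f H v w = srgHadamardColoring G f H w v := by
  simp only [srgHadamardColoring, hH.apply v.2 w.2, G.adj_comm (f v.1)]

@[simp]
lemma mem_colorNeighborFinset_srgHadamardColoring {f : Fin c → V}
    {H : Matrix (Fin ζ) (Fin ζ) ℤ} {i : Fin 2} {v w : Fin c × Fin ζ} :
    w ∈ (multiK c ζ).colorNeighborFinset (srgHadamardColoring G f H) i v ↔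
      v.1 ≠ w.1 ∧ (G.Adj (f v.1) (f w.1) ↔ (H v.2 w.2 = 1 ↔ i = 0)) := by
  simp only [SimpleGraph.mem_colorNeighborFinset, multiK_adj, srgHadamardColoring]
  fin_cases i <;> split_ifs <;> simp <;> tauto

lemma card_le_of_snd_eq [Fintype V] {α β : Type*} (f : α ↪ V) (s : Finset (α × β)) (b : β)
    (P : V → Prop) [DecidablePred P] (hs : ∀ x ∈ s, x.2 = b ∧ P (f x.1)) :
    #s ≤ #{u | P u} :=
  card_le_card_of_injOn (f ∘ Prod.fst) (fun x hx => by simpa using (hs x hx).2)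
    fun x hx y hy hxy => Prod.ext (f.injective hxy) (((hs x hx).1).trans ((hs y hy).1).symm)

lemma card_inter_colorNeighborFinset_srgHadamardColoring_le [Fintype V] [DecidableEq V]
    {n α : ℕ} (hn : 2 ≤ n) (hG : G.IsSRGWith (4 * n - 3) (2 * n - 2) (n - 2) (n - 1))
    (f : Fin c ↪ V) {H : Matrix (Fin ζ) (Fin ζ) ℤ} (hH : IsBHadamard α H)
    {a b : Fin c × Fin ζ} (hab : a ≠ b) (i : Fin 2) :
    #((multiK c ζ).colorNeighborFinset (srgHadamardColoring G f H) i a ∩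
      (multiK c ζ).colorNeighborFinset (srgHadamardColoring G f H) i b) ≤
      (ζ + α) * (n - 1) := by
  obtain ⟨p, k⟩ := a
  obtain ⟨q, l⟩ := b
  by_cases hpq : p = q
  · subst hpq
    have hkl : k ≠ l := fun h => hab (by rw [h])
    calc _ ≤ (2 * n - 2) * #{m | H k m = H l m} := by
          refine card_le_mul_card_image_of_maps_to (f := Prod.snd) ?_ _ fun m _ => ?_
          · intro x hx
            simp only [mem_inter, mem_colorNeighborFinset_srgHadamardColoring] at hx
            simp only [mem_filter, mem_univ, true_and, hH.1.eq_iff]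
            tauto
          · refine (card_le_of_snd_eq f _ m
              (fun u => u ≠ f p ∧ (G.Adj (f p) u ↔ (H k m = 1 ↔ i = 0))) ?_).trans
              (hG.card_filter_adj_iff_eq hn _ _).le
            intro x hx
            simp only [mem_filter, mem_inter, mem_colorNeighborFinset_srgHadamardColoring] at hx
            obtain ⟨⟨⟨hp, hk⟩, -⟩, rfl⟩ := hx
            exact ⟨rfl, f.injective.ne hp |>.symm, hk⟩
      _ = (n - 1) * (2 * #{m | H k m = H l m}) := by
          rw [show 2 * n - 2 = 2 * (n - 1) by omega]; ring
      _ ≤ (n - 1) * (ζ + α) := by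
          gcongr
          simpa using hH.two_mul_card_eq_le hkl
      _ = _ := mul_comm _ _
  · calc _ ≤ (n - 1) * #(univ : Finset (Fin ζ)) := by
          refine card_le_mul_card_image_of_maps_to (f := Prod.snd) (fun _ _ => mem_univ _) _
            fun m _ => ?_
          refine (card_le_of_snd_eq f _ m (fun u => u ≠ f p ∧ u ≠ f q ∧
              (G.Adj (f p) u ↔ (H k m = 1 ↔ i = 0)) ∧
              (G.Adj (f q) u ↔ (H l m = 1 ↔ i = 0))) ?_).trans
            (hG.card_filter_adj_iff_adj_iff_le hn (f.injective.ne hpq) _ _)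
          intro x hx
          simp only [mem_filter, mem_inter, mem_colorNeighborFinset_srgHadamardColoring] at hx
          obtain ⟨⟨⟨hp, hk⟩, hq, hl⟩, rfl⟩ := hx
          exact ⟨rfl, (f.injective.ne hp).symm, (f.injective.ne hq).symm, hk, hl⟩
      _ ≤ _ := by
          rw [card_univ, Fintype.card_fin, mul_comm]
          exact Nat.mul_le_mul_right _ (Nat.le_add_right _ _)

lemma not_arrows_of_isSRGWith_of_isBHadamard {n α : ℕ} (hn : 2 ≤ n) (hc : c ≤ 4 * n - 3)
    [Fintype V] (hG : G.IsSRGWith (4 * n - 3) (2 * n - 2) (n - 2) (n - 1))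
    {H : Matrix (Fin ζ) (Fin ζ) ℤ} (hHsymm : H.IsSymm) (hH : IsBHadamard α H) :
    ¬ Arrows c ζ ((ζ + α) * (n - 1) + 1) 2 := by
  classical
  obtain ⟨f⟩ : Nonempty (Fin c ↪ V) :=
    Function.Embedding.nonempty_of_card_le (by rwa [Fintype.card_fin, hG.card])
  intro hA
  obtain ⟨i, hmono⟩ := hA _ (srgHadamardColoring_comm (G := G) (f := f) hHsymm)
  obtain ⟨a, b, hab, hle⟩ := SimpleGraph.hasMonoK2_iff.1 hmono
  exact Nat.not_succ_le_self _
    (hle.trans (card_inter_colorNeighborFinset_srgHadamardColoring_le hn hG f hH hab i))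

end Coloring

/-- **Theorem (exact value of the set multipartite Ramsey number).**
Let `n ≥ 2`. Suppose there exist a strongly regular graph with parameters
`(4n-3, 2n-2, n-2, n-1)` and a symmetric `[α]`-Hadamard matrix of even order `ζ` with
`ζ > (√2+1)(2n-1)(4αn-4α+1)`. Then `M_ζ(K_{2, (ζ+α)(n-1)+1}; 2) = 4n-2`. -/
theorem statement4 (n ζ α : ℕ) (hn : 2 ≤ n)
    (hSRG : ∃ (V : Type) (_ : Fintype V) (G : SimpleGraph V) (_ : DecidableRel G.Adj),
      G.IsSRGWith (4 * n - 3) (2 * n - 2) (n - 2) (n - 1))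
    (hHad : ∃ H : Matrix (Fin ζ) (Fin ζ) ℤ, H.IsSymm ∧ IsBHadamard α H)
    (hζeven : Even ζ)
    (hζbig : (ζ : ℝ) >
      (Real.sqrt 2 + 1) * (2 * (n : ℝ) - 1) * (4 * (α : ℝ) * n - 4 * α + 1)) :
    setRamsey ζ ((ζ + α) * (n - 1) + 1) 2 = 4 * n - 2 := by
  obtain ⟨V, _, G, _, hG⟩ := hSRG
  obtain ⟨H, hHsymm, hH⟩ := hHad
  have hζ : 2 * (2 * n - 1) * (4 * α * (n - 1) + 1) < ζ := by
    have hcast : ((2 * (2 * n - 1) * (4 * α * (n - 1) + 1) : ℕ) : ℝ) =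
        2 * ((2 * n - 1) * (4 * α * n - 4 * α + 1)) := by
      push_cast [Nat.cast_sub (by omega : 1 ≤ 2 * n), Nat.cast_sub (by omega : 1 ≤ n)]
      ring
    have hpos : (0 : ℝ) ≤ (2 * n - 1) * (4 * α * n - 4 * α + 1) := by
      have hn' : (2 : ℝ) ≤ n := by exact_mod_cast hn
      exact mul_nonneg (by linarith) (by nlinarith [α.cast_nonneg (α := ℝ)])
    rw [← Nat.cast_lt (α := ℝ), hcast]
    nlinarith [Real.one_lt_sqrt_two]
  refine setRamsey_eq (by omega) (arrows_four_mul_sub_two (by omega) hζeven hζ) fun c hc => ?_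
  exact not_arrows_of_isSRGWith_of_isBHadamard hn (by omega) hG hHsymm hH
end

section
/- Let α and ζ be non-negative integers with α ≤ ζ/2. If there exists a Hadamard matrix of order ζ, then there exists an [α]-Hadamard matrix of order ζ−α. -/
open Finset Matrix

/-! Keep the first `ζ - α` rows and columns of a Hadamard matrix of order `ζ`. Two rows of this
corner are truncations of orthogonal `±1` rows of length `ζ`, so their inner product is minus the
sum of the at most `α` discarded products, each of which is `±1`. -/

theorem abs_sum_le_card_compl_of_sum_eq_zero {ι R : Type*} [Fintype ι] [DecidableEq ι]
    [Ring R] [LinearOrder R] [IsOrderedRing R] {f : ι → R} (hf : ∀ k, |f k| ≤ 1)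
    (hsum : ∑ k, f k = 0) (s : Finset ι) : |∑ k ∈ s, f k| ≤ #sᶜ := by
  have hs : ∑ k ∈ s, f k = -∑ k ∈ sᶜ, f k := by
    rw [eq_neg_iff_add_eq_zero, sum_add_sum_compl, hsum]
  calc |∑ k ∈ s, f k| = |∑ k ∈ sᶜ, f k| := by rw [hs, abs_neg]
    _ ≤ ∑ k ∈ sᶜ, |f k| := abs_sum_le_sum_abs _ _
    _ ≤ #sᶜ • (1 : R) := sum_le_card_nsmul _ _ _ fun k _ => hf k
    _ = #sᶜ := nsmul_one _

theorem PMOne.submatrix {ι κ : Type*} {H : Matrix ι ι ℤ} (hH : PMOne H) (e : κ → ι) :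
    PMOne (H.submatrix e e) :=
  fun i j => hH (e i) (e j)

theorem PMOne.abs_mul_le_one {ι : Type*} {H : Matrix ι ι ℤ} (hH : PMOne H) (i j k : ι) :
    |H i k * H j k| ≤ 1 := by
  rcases hH i k with h₁ | h₁ <;> rcases hH j k with h₂ | h₂ <;> simp [h₁, h₂]

theorem IsBHadamard.mono {ι : Type*} [Fintype ι] {α β : ℕ} {H : Matrix ι ι ℤ}
    (hH : IsBHadamard α H) (hαβ : α ≤ β) : IsBHadamard β H :=
  ⟨hH.1, fun i j hij => (hH.2 i j hij).trans (by exact_mod_cast hαβ)⟩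

theorem IsHadamard.isBHadamard_submatrix {ι κ : Type*} [Fintype ι] [DecidableEq ι] [Fintype κ]
    {H : Matrix ι ι ℤ} (hH : _root_.IsHadamard H) (e : κ ↪ ι) :
    IsBHadamard (Fintype.card ι - Fintype.card κ) (H.submatrix e e) := by
  refine ⟨hH.1.submatrix e, fun i j hij => ?_⟩
  have horth : ∑ k, H (e i) k * H (e j) k = 0 := by
    simpa [mul_apply, one_apply_ne (e.injective.ne hij)] using
      congrFun (congrFun hH.2 (e i)) (e j)
  have hentry : (H.submatrix e e * (H.submatrix e e)ᵀ) i j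
      = ∑ k ∈ univ.map e, H (e i) k * H (e j) k := by
    simp [mul_apply, sum_map]
  have hcard : #(univ.map e)ᶜ = Fintype.card ι - Fintype.card κ := by
    simp [card_compl]
  rw [hentry, ← hcard]
  exact abs_sum_le_card_compl_of_sum_eq_zero (hH.1.abs_mul_le_one (e i) (e j)) horth _

theorem statement5_general (α ζ : ℕ)
    (hHad : ∃ H : Matrix (Fin ζ) (Fin ζ) ℤ, _root_.IsHadamard H) :
    ∃ H' : Matrix (Fin (ζ - α)) (Fin (ζ - α)) ℤ, IsBHadamard α H' := by
  obtain ⟨H, hH⟩ := hHad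
  have hcorner := hH.isBHadamard_submatrix (Fin.castLEEmb (Nat.sub_le ζ α))
  rw [Fintype.card_fin, Fintype.card_fin] at hcorner
  exact ⟨_, hcorner.mono (by omega)⟩

/-- **Theorem.** Let `α, ζ` be non-negative integers with `α ≤ ζ/2`. If there exists a
Hadamard matrix of order `ζ`, then there exists an `[α]`-Hadamard matrix of order `ζ - α`. -/
theorem statement5 (α ζ : ℕ) (hαζ : (α : ℚ) ≤ (ζ : ℚ) / 2)
    (hHad : ∃ H : Matrix (Fin ζ) (Fin ζ) ℤ, _root_.IsHadamard H) :
    ∃ H' : Matrix (Fin (ζ - α)) (Fin (ζ - α)) ℤ, IsBHadamard α H' :=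
  statement5_general α ζ hHad
end

section
/- Let p be a prime number and α > 0 an integer with p^α ≡ 3 (mod 4). Then there exists a 1-Hadamard matrix of order p^α; in fact the matrix H = I + Q, where Q(i,j) = χ(a_i − a_j) is the Paley matrix built from the quadratic character χ of GF(p^α), satisfies H·Hᵗ = (p^α + 1)·I − J, where J is the all-ones matrix, so every off-diagonal entry of H·Hᵗ equals −1. -/
open Finset Matrix

/-- The Paley matrix of a finite field `F`: `Q i j = χ(i - j)` where `χ` is the quadratic
character of `F`. -/
def paleyMatrix (F : Type*) [Field F] [Fintype F] [DecidableEq F] : Matrix F F ℤ :=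
  Matrix.of fun i j => quadraticChar F (i - j)

/-!
Let `χ` be the quadratic character of `F` and `Q` the Paley matrix, `q = #F`. Since `q ≡ 3 (mod 4)`,
`-1` is a non-square, so `Q` is skew-symmetric and `(1 + Q)(1 + Q)ᵀ = 1 + Q Qᵀ`. The diagonal
entries of `Q Qᵀ` are `q - 1`; an off-diagonal entry is a correlation `∑ₐ χ(a) χ(a + b)` with
`b ≠ 0`, which is a Jacobi sum and equals `-1`.
-/

lemma ringChar_ne_two_of_card_mod_four_eq_three {F : Type*} [Field F] [Fintype F]
    (h : Fintype.card F % 4 = 3) : ringChar F ≠ 2 := fun h2 => by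
  have := FiniteField.even_card_of_char_two h2
  omega

section Paley

variable {F : Type*} [Field F] [Fintype F] [DecidableEq F]

lemma quadraticChar_neg_one_of_card_mod_four_eq_three (h : Fintype.card F % 4 = 3) :
    quadraticChar F (-1) = -1 :=
  quadraticChar_neg_one_iff_not_isSquare.mpr
    (FiniteField.isSquare_neg_one_iff.not_left.mpr h)

lemma quadraticChar_sum_sq : ∑ a : F, quadraticChar F a ^ 2 = Fintype.card F - 1 := by
  rw [← Finset.sum_erase univ (a := 0) (by simp),
    Finset.sum_congr rfl fun a ha => quadraticChar_sq_one (Finset.ne_of_mem_erase ha)]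
  simp [Finset.card_erase_of_mem, Nat.cast_sub Fintype.card_pos]

/-- Substituting `a = -b x` turns the sum into `χ(-1) J(χ, χ)`, and `J(χ, χ) = -χ(-1)`. -/
lemma quadraticChar_sum_mul_add (hF : ringChar F ≠ 2) {b : F} (hb : b ≠ 0) :
    ∑ a : F, quadraticChar F a * quadraticChar F (a + b) = -1 := by
  set χ := quadraticChar F
  have hχb : χ (-b) * χ b = χ (-1) := by
    rw [← map_mul, show -b * b = -1 * b ^ 2 by ring, map_mul, quadraticChar_sq_one' hb, mul_one]
  have hJ : jacobiSum χ χ = -χ (-1) := by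
    simpa only [(quadraticChar_isQuadratic F).inv] using
      jacobiSum_nontrivial_inv (quadraticChar_ne_one hF)
  calc ∑ a : F, χ a * χ (a + b)
      = ∑ x : F, χ (-b * x) * χ (-b * x + b) :=
        (Fintype.sum_equiv (Equiv.mulLeft₀ (-b) (neg_ne_zero.mpr hb)) _ _ fun _ => rfl).symm
    _ = χ (-1) * jacobiSum χ χ := by
        rw [jacobiSum, Finset.mul_sum, ← hχb]
        refine Finset.sum_congr rfl fun x _ => ?_
        rw [show -b * x + b = b * (1 - x) by ring, map_mul, map_mul]
        ring
    _ = -1 := by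
        rw [hJ, mul_neg, ← sq, quadraticChar_sq_one (neg_ne_zero.mpr one_ne_zero)]

lemma paleyMatrix_apply (i j : F) : paleyMatrix F i j = quadraticChar F (i - j) := rfl

lemma paleyMatrix_transpose (h : Fintype.card F % 4 = 3) :
    (paleyMatrix F)ᵀ = -paleyMatrix F := by
  ext i j
  rw [transpose_apply, neg_apply, paleyMatrix_apply, paleyMatrix_apply,
    ← neg_sub, neg_eq_neg_one_mul (i - j), map_mul,
    quadraticChar_neg_one_of_card_mod_four_eq_three h, neg_one_mul]

lemma paleyMatrix_mul_transpose (hF : ringChar F ≠ 2) :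
    paleyMatrix F * (paleyMatrix F)ᵀ =
      (Fintype.card F : ℤ) • (1 : Matrix F F ℤ) - Matrix.of fun _ _ => (1 : ℤ) := by
  ext i j
  have hshift : (paleyMatrix F * (paleyMatrix F)ᵀ) i j =
      ∑ a : F, quadraticChar F a * quadraticChar F (a + (j - i)) := by
    refine Fintype.sum_equiv (Equiv.subLeft i) _ _ fun k => ?_
    simp only [transpose_apply, paleyMatrix_apply, Equiv.subLeft_apply]
    ring_nf
  rw [hshift, Matrix.sub_apply, Matrix.smul_apply, Matrix.one_apply, of_apply]
  by_cases hij : i = j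
  · subst hij
    simp only [sub_self, add_zero, ← sq, quadraticChar_sum_sq, if_pos, smul_eq_mul, mul_one]
  · rw [quadraticChar_sum_mul_add hF (sub_ne_zero.mpr (Ne.symm hij)), if_neg hij]
    simp

lemma one_add_paleyMatrix_mul_transpose (h : Fintype.card F % 4 = 3) :
    (1 + paleyMatrix F) * (1 + paleyMatrix F)ᵀ =
      ((Fintype.card F : ℤ) + 1) • (1 : Matrix F F ℤ) - Matrix.of fun _ _ => (1 : ℤ) := by
  have hQQ := paleyMatrix_mul_transpose (ringChar_ne_two_of_card_mod_four_eq_three h)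
  calc (1 + paleyMatrix F) * (1 + paleyMatrix F)ᵀ
      = 1 + ((paleyMatrix F)ᵀ + paleyMatrix F) + paleyMatrix F * (paleyMatrix F)ᵀ := by
        rw [transpose_add, transpose_one, add_mul, mul_add, mul_add, one_mul, one_mul, mul_one]
        abel
    _ = _ := by
        rw [hQQ, paleyMatrix_transpose h, neg_add_cancel, add_zero, add_smul, one_smul]
        abel

lemma pmOne_one_add_paleyMatrix : PMOne (1 + paleyMatrix F) := by
  intro i j
  rw [Matrix.add_apply, paleyMatrix_apply]
  by_cases hij : i = j
  · left
    rw [hij, one_apply_eq, sub_self, quadraticChar_zero, add_zero]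
  · rw [one_apply_ne hij, zero_add]
    exact quadraticChar_dichotomy (sub_ne_zero.mpr hij)

end Paley

section Hadamard

variable {ι κ : Type*} [Fintype ι] [Fintype κ]

lemma isEHadamard_one_of_offDiag_eq_neg_one [Nontrivial ι] {H : Matrix ι ι ℤ} (hH : PMOne H)
    (hoff : ∀ i j, i ≠ j → (H * Hᵀ) i j = -1) : IsEHadamard 1 H := by
  obtain ⟨i, j, hij⟩ := exists_pair_ne ι
  exact ⟨⟨hH, fun i j hij => by simp [hoff i j hij]⟩, i, j, hij, by simp [hoff i j hij]⟩

lemma IsEHadamard.reindex {α : ℕ} {H : Matrix ι ι ℤ} (hH : IsEHadamard α H) (e : ι ≃ κ) :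
    IsEHadamard α (Matrix.reindex e e H) := by
  have hprod :
      Matrix.reindex e e H * (Matrix.reindex e e H)ᵀ = Matrix.reindex e e (H * Hᵀ) := by
    rw [transpose_reindex, reindex_apply, reindex_apply, reindex_apply, submatrix_mul_equiv]
  obtain ⟨⟨hpm, hbound⟩, i, j, hij, hij_eq⟩ := hH
  refine ⟨⟨fun a b => hpm _ _, fun a b hab => ?_⟩, e i, e j, e.injective.ne hij, ?_⟩
  · rw [hprod]
    exact hbound _ _ (e.symm.injective.ne hab)
  · simpa [hprod] using hij_eq

end Hadamard

theorem statement7_general (p : ℕ) (α : ℕ) (hmod : p ^ α % 4 = 3)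
    (F : Type) [Field F] [Fintype F] [DecidableEq F] (hF : Fintype.card F = p ^ α) :
    (∃ H : Matrix (Fin (p ^ α)) (Fin (p ^ α)) ℤ, IsEHadamard 1 H) ∧
    IsEHadamard 1 (1 + paleyMatrix F) ∧
    ((1 + paleyMatrix F) * (1 + paleyMatrix F)ᵀ =
      ((p ^ α : ℤ) + 1) • (1 : Matrix F F ℤ) - Matrix.of fun _ _ => (1 : ℤ)) ∧
    (∀ i j : F, i ≠ j → ((1 + paleyMatrix F) * (1 + paleyMatrix F)ᵀ : Matrix F F ℤ) i j = -1) := by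
  have hcard : Fintype.card F % 4 = 3 := hF ▸ hmod
  have hHH : (1 + paleyMatrix F) * (1 + paleyMatrix F)ᵀ =
      ((p ^ α : ℤ) + 1) • (1 : Matrix F F ℤ) - Matrix.of fun _ _ => (1 : ℤ) := by
    rw [one_add_paleyMatrix_mul_transpose hcard, hF]
    push_cast
    rfl
  have hoff : ∀ i j : F, i ≠ j →
      ((1 + paleyMatrix F) * (1 + paleyMatrix F)ᵀ : Matrix F F ℤ) i j = -1 := by
    intro i j hij
    rw [hHH, Matrix.sub_apply, Matrix.smul_apply, one_apply_ne hij, of_apply, smul_zero,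
      zero_sub]
  have : Nontrivial F := Fintype.one_lt_card_iff_nontrivial.mp (by omega)
  have hE := isEHadamard_one_of_offDiag_eq_neg_one pmOne_one_add_paleyMatrix hoff
  exact ⟨⟨_, hE.reindex (Fintype.equivFinOfCardEq hF)⟩, hE, hHH, hoff⟩

/-- **Theorem.** Let `p` be a prime and `α > 0` with `p^α ≡ 3 (mod 4)`. Then there exists a
`1`-Hadamard matrix of order `p^α`; in fact, for `F = GF(p^α)` the matrix `H = I + Q`, where `Q`
is the Paley matrix of `F`, satisfies `H * Hᵀ = (p^α + 1) • I - J` (with `J` the all-ones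
matrix); in particular every off-diagonal entry of `H * Hᵀ` equals `-1`. -/
theorem statement7 (p : ℕ) (hp : p.Prime) (α : ℕ) (hα : 0 < α) (hmod : p ^ α % 4 = 3)
    (F : Type) [Field F] [Fintype F] [DecidableEq F] (hF : Fintype.card F = p ^ α) :
    (∃ H : Matrix (Fin (p ^ α)) (Fin (p ^ α)) ℤ, IsEHadamard 1 H) ∧
    IsEHadamard 1 (1 + paleyMatrix F) ∧
    ((1 + paleyMatrix F) * (1 + paleyMatrix F)ᵀ =
      ((p ^ α : ℤ) + 1) • (1 : Matrix F F ℤ) - Matrix.of fun _ _ => (1 : ℤ)) ∧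
    (∀ i j : F, i ≠ j → ((1 + paleyMatrix F) * (1 + paleyMatrix F)ᵀ : Matrix F F ℤ) i j = -1) :=
  statement7_general p α hmod F hF
end

section
/- Let G be a strongly regular graph with parameters (n,k,λ,μ) that contains at least one pair of adjacent vertices and at least one pair of distinct non-adjacent vertices. Then θ = max{k/2, λ, μ, (n−k−1)/2, n−2−2k+μ, n−2k+λ} is an integer. -/
open Finset Matrix

/-!
With `m = n - k - 1` the complement is strongly regular with parameters
`(n, m, n - 2 - 2k + μ, n - 2k + ℓ)`, so `θ = max {k/2, m/2, I}` for an integer `I` built from the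
four "λ, μ" parameters of the graph and its complement. Only `k/2` or `m/2` can be a half-integer,
and by complementation it suffices to rule out that `k/2` is the maximum with `k` odd. Writing
`k = 2t + 1`, the bounds `ℓ, μ ≤ t` and `m ≤ k` make every term of
`k (k - ℓ - 1 - t) + (k - m) t + m (t - μ) = k (k - ℓ - 1) - m μ = 0` nonnegative, which forces
`ℓ = μ = t` and `m = k`, contradicting `2 (n - 2k + ℓ) ≤ k`.
-/

namespace SimpleGraph.IsSRGWith

variable {V : Type*} [Fintype V] {G : SimpleGraph V} [DecidableRel G.Adj] {n k ℓ μ : ℕ}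

theorem lt_of_adj (h : G.IsSRGWith n k ℓ μ) {v w : V} (hvw : G.Adj v w) : ℓ < k := by
  rw [← h.of_adj v w hvw, ← h.regular.degree_eq v]
  exact hvw.card_commonNeighbors_lt_degree

theorem add_two_le_of_not_adj (h : G.IsSRGWith n k ℓ μ) {v w : V} (hne : v ≠ w)
    (hvw : ¬G.Adj v w) : k + 2 ≤ n := by
  classical
  have hpos : 0 < Gᶜ.degree v := (Gᶜ.degree_pos_iff_exists_adj v).2 ⟨w, by simp [hne, hvw]⟩
  rw [h.compl_is_regular.degree_eq] at hpos
  omega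

theorem param_eq_int (h : G.IsSRGWith n k ℓ μ) (hℓk : ℓ < k) (hkn : k < n) :
    (k : ℤ) * (k - ℓ - 1) = (n - k - 1) * μ := by
  have hid := h.param_eq G (by omega)
  rw [Nat.sub_sub, Nat.sub_sub] at hid
  zify [show ℓ + 1 ≤ k by omega, show k + 1 ≤ n by omega] at hid
  linear_combination hid

end SimpleGraph.IsSRGWith

theorem even_of_param_eq {k ℓ μ m : ℤ} (hid : k * (k - ℓ - 1) = m * μ) (hm : 1 ≤ m)
    (hmk : m ≤ k) (hℓ : 2 * ℓ ≤ k) (hμ : 2 * μ ≤ k) (hμ' : 2 * (m - k + 1 + ℓ) ≤ k) :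
    Even k := by
  by_contra hodd
  obtain ⟨t, rfl⟩ := Int.not_even_iff_odd.1 hodd
  have hsum : (2 * t + 1) * (t - ℓ) + (2 * t + 1 - m) * t + m * (t - μ) = 0 := by
    linear_combination hid
  have h₁ : 0 ≤ (2 * t + 1) * (t - ℓ) := mul_nonneg (by omega) (by omega)
  have h₂ : 0 ≤ (2 * t + 1 - m) * t := mul_nonneg (by omega) (by omega)
  have h₃ : 0 ≤ m * (t - μ) := mul_nonneg (by omega) (by omega)
  have hℓt : t - ℓ = 0 := (mul_eq_zero.1 (by linarith : (2 * t + 1) * (t - ℓ) = 0)).resolve_left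
    (by omega)
  rcases mul_eq_zero.1 (by linarith : (2 * t + 1 - m) * t = 0) with h | h <;> omega

theorem exists_int_eq_max_half_half_int {a b c : ℤ} (ha : 2 * c ≤ a → b ≤ a → Even a)
    (hb : 2 * c ≤ b → a ≤ b → Even b) :
    ∃ z : ℤ, max (max ((a : ℚ) / 2) ((b : ℚ) / 2)) c = z := by
  rw [max_div_div_right zero_le_two, ← Int.cast_max]
  rcases le_or_gt ((max a b : ℤ) / 2 : ℚ) c with hc | hc
  · exact ⟨c, max_eq_right hc⟩
  have h2c : 2 * c ≤ max a b := by exact_mod_cast (by linarith : (2 * c : ℚ) ≤ (max a b : ℤ))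
  obtain ⟨r, hr⟩ : Even (max a b) := by
    rcases le_total b a with hba | hab
    · rw [max_eq_left hba] at h2c ⊢
      exact ha h2c hba
    · rw [max_eq_right hab] at h2c ⊢
      exact hb h2c hab
  exact ⟨r, by rw [max_eq_left hc.le, hr]; push_cast; ring⟩

/-- **Lemma.** Let `G` be a strongly regular graph with parameters `(n,k,ℓ,μ)` that has at least
one pair of adjacent vertices and at least one pair of distinct non-adjacent vertices. Then
`θ = max {k/2, ℓ, μ, (n-k-1)/2, n-2-2k+μ, n-2k+ℓ}` (taken in `ℚ`) is an integer. -/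
theorem statement13 {V : Type*} [Fintype V] (G : SimpleGraph V) [DecidableRel G.Adj]
    (n k ℓ μ : ℕ) (hG : G.IsSRGWith n k ℓ μ)
    (hadj : ∃ a b : V, G.Adj a b)
    (hnadj : ∃ a b : V, a ≠ b ∧ ¬G.Adj a b) :
    ∃ z : ℤ, max (max (max ((k : ℚ) / 2) (ℓ : ℚ)) (max ((μ : ℚ)) (((n : ℚ) - k - 1) / 2)))
      (max ((n : ℚ) - 2 - 2 * k + μ) ((n : ℚ) - 2 * k + ℓ)) = (z : ℚ) := by
  obtain ⟨a, b, hab⟩ := hadj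
  obtain ⟨c, d, hcd, hncd⟩ := hnadj
  have hℓk := hG.lt_of_adj hab
  have hkn := hG.add_two_le_of_not_adj hcd hncd
  have hid := hG.param_eq_int hℓk (by omega)
  obtain ⟨z, hz⟩ := exists_int_eq_max_half_half_int (a := k) (b := n - k - 1)
    (c := max (max ℓ μ) (max (n - 2 - 2 * k + μ) (n - 2 * k + ℓ)))
    (fun hc hmk => even_of_param_eq hid (by omega) hmk (by omega) (by omega) (by omega))
    (fun hc hkm => even_of_param_eq (ℓ := n - 2 - 2 * k + μ) (μ := n - 2 * k + ℓ) (m := k)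
        (by linear_combination hid) (by omega) hkm (by omega) (by omega) (by omega))
  refine ⟨z, Eq.trans ?_ hz⟩
  push_cast
  simp only [max_assoc, max_comm, max_left_comm]
end

section
/- Let n, k, m be positive integers with k ≥ 2 and m ≥ 2. If m·(⌈((n−1)k² + k + 2m − 1)/m⌉ − 1) is divisible by k, then M_m(K_{2,n}; k) ≤ ⌈((n−1)k² + k + 2m − 1)/m⌉. -/
open Finset Matrix

/-! In a colouring without a monochromatic `K_{2,n}`, two distinct vertices have fewer than `n`
common neighbours of each colour, so among `N` vertices there are at most `k (n-1) N (N-1)`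
colour cherries `(v, a, b, i)`, with `a ≠ b` both joined to `v` in colour `i`. In a `kt`-regular
graph, convexity of `x ↦ x (x-1)` gives at least `k t (t-1)` cherries at each vertex. For
`K_{c×m}` with `m (c-1) = k t` this forces `t (t-1) ≤ (n-1)(cm-1)`, which fails once
`cm ≥ (n-1)k² + k + 2m - 1`. -/

lemma card_mul_mul_pred_le_sum_mul_pred {ι : Type*} (s : Finset ι) (f : ι → ℤ) (t : ℤ)
    (h : ∑ i ∈ s, f i = #s * t) :
    #s * (t * (t - 1)) ≤ ∑ i ∈ s, f i * (f i - 1) :=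
  calc (#s : ℤ) * (t * (t - 1))
      = ∑ i ∈ s, (t * (t - 1) + (2 * t - 1) * (f i - t)) := by
        rw [sum_add_distrib, sum_const, ← mul_sum, sum_sub_distrib, h, sum_const, nsmul_eq_mul,
          nsmul_eq_mul]
        ring
    _ ≤ ∑ i ∈ s, f i * (f i - 1) :=
        sum_le_sum fun i _ => by nlinarith [sq_nonneg (f i - t)]

lemma Finset.natCast_card_offDiag {α : Type*} [DecidableEq α] (s : Finset α) :
    (#s.offDiag : ℤ) = #s * (#s - 1) := by
  rw [offDiag_card, Nat.cast_sub (Nat.le_mul_self _)]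
  push_cast
  ring

section ColorNeighborFinset

variable {V : Type*} [Fintype V] {G : SimpleGraph V} [DecidableRel G.Adj]
  {k : ℕ} {C : V → V → Fin k}

variable (G C) in
def colorNeighborFinset (v : V) (i : Fin k) : Finset V := {w | G.Adj v w ∧ C v w = i}

lemma mem_colorNeighborFinset {v w : V} {i : Fin k} :
    w ∈ colorNeighborFinset G C v i ↔ G.Adj v w ∧ C v w = i := by
  simp [colorNeighborFinset]

lemma mem_colorNeighborFinset_comm (hC : ∀ v w, C v w = C w v) {v w : V} {i : Fin k} :
    w ∈ colorNeighborFinset G C v i ↔ v ∈ colorNeighborFinset G C w i := by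
  simp only [mem_colorNeighborFinset, G.adj_comm, hC v w]

lemma sum_card_colorNeighborFinset (v : V) :
    ∑ i, #(colorNeighborFinset G C v i) = G.degree v := by
  rw [← G.card_neighborFinset_eq_degree,
    card_eq_sum_card_fiberwise (f := C v) (t := univ) fun _ _ => mem_univ _]
  refine sum_congr rfl fun i _ => congrArg card ?_
  ext w
  simp [mem_colorNeighborFinset]

lemma card_inter_colorNeighborFinset_lt [DecidableEq V] {n : ℕ} {i : Fin k}
    (hno : ¬ HasMonoK2 G C i n) {a b : V} (hab : a ≠ b) :
    #(colorNeighborFinset G C a i ∩ colorNeighborFinset G C b i) < n := by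
  by_contra! hn
  obtain ⟨S, hS, rfl⟩ := exists_subset_card_eq hn
  have hmem : ∀ v ∈ S, G.Adj a v ∧ G.Adj b v ∧ C a v = i ∧ C b v = i := fun v hv => by
    have := hS hv
    simp only [mem_inter, mem_colorNeighborFinset] at this
    tauto
  exact hno ⟨a, b, S, hab, fun ha => G.irrefl (hmem a ha).1,
    fun hb => G.irrefl (hmem b hb).2.1, rfl, hmem⟩

lemma sum_card_offDiag_colorNeighborFinset [DecidableEq V] (hC : ∀ v w, C v w = C w v)
    (i : Fin k) :
    ∑ v, #(colorNeighborFinset G C v i).offDiag =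
      ∑ p ∈ (univ : Finset V).offDiag,
        #(colorNeighborFinset G C p.1 i ∩ colorNeighborFinset G C p.2 i) := by
  convert sum_card_bipartiteAbove_eq_sum_card_bipartiteBelow (s := univ)
    (t := (univ : Finset V).offDiag)
    (r := fun v p => p.1 ∈ colorNeighborFinset G C v i ∧ p.2 ∈ colorNeighborFinset G C v i)
    using 3 with v _ p _
  · ext p
    simp only [bipartiteAbove, mem_filter, mem_offDiag, mem_univ, true_and]
    tauto
  · ext v
    simp [bipartiteBelow, mem_colorNeighborFinset_comm hC]

end ColorNeighborFinset

theorem exists_hasMonoK2_of_isRegularOfDegree {V : Type*} [Fintype V] [DecidableEq V]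
    [Nonempty V] {G : SimpleGraph V} [DecidableRel G.Adj] {k t n : ℕ}
    (hG : G.IsRegularOfDegree (k * t))
    (h : ((n : ℤ) - 1) * (Fintype.card V - 1) < t * (t - 1))
    (C : V → V → Fin k) (hC : ∀ v w, C v w = C w v) : ∃ i, HasMonoK2 G C i n := by
  by_contra! hno
  have hk : 0 < k := (C (Classical.arbitrary V) (Classical.arbitrary V)).pos
  let cherries : ℤ := ∑ i, ∑ v, (#(colorNeighborFinset G C v i).offDiag : ℤ)
  have lower : Fintype.card V * (k * (t * (t - 1))) ≤ cherries := by
    calc (Fintype.card V : ℤ) * (k * (t * (t - 1)))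
        = ∑ _v : V, (k : ℤ) * (t * (t - 1)) := by simp
      _ ≤ ∑ v, ∑ i, (#(colorNeighborFinset G C v i).offDiag : ℤ) := sum_le_sum fun v _ => by
        simp only [natCast_card_offDiag]
        simpa using card_mul_mul_pred_le_sum_mul_pred univ
          (fun i => (#(colorNeighborFinset G C v i) : ℤ)) t
          (by rw [← Nat.cast_sum, sum_card_colorNeighborFinset, hG v]; simp)
      _ = cherries := sum_comm
  have upper : cherries ≤ k * (Fintype.card V * (Fintype.card V - 1) * (n - 1)) := by
    calc cherries
        = ∑ i, ∑ p ∈ (univ : Finset V).offDiag,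
            (#(colorNeighborFinset G C p.1 i ∩ colorNeighborFinset G C p.2 i) : ℤ) :=
          sum_congr rfl fun i _ => mod_cast sum_card_offDiag_colorNeighborFinset hC i
      _ ≤ ∑ _i : Fin k, ∑ _p ∈ (univ : Finset V).offDiag, ((n : ℤ) - 1) :=
          sum_le_sum fun i _ => sum_le_sum fun p hp => by
            have := card_inter_colorNeighborFinset_lt (hno i) (mem_offDiag.1 hp).2.2
            omega
      _ = k * (Fintype.card V * (Fintype.card V - 1) * (n - 1)) := by
          simp only [sum_const, nsmul_eq_mul, natCast_card_offDiag, card_univ, Fintype.card_fin]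
  have hpos : (0 : ℤ) < k * Fintype.card V := by positivity
  nlinarith [mul_lt_mul_of_pos_left h hpos]

lemma arrows_of_lt_s14 {c s n k t : ℕ} (hc : 0 < c) (hs : 0 < s) (hdeg : (c - 1) * s = k * t)
    (h : ((n : ℤ) - 1) * (c * s - 1) < t * (t - 1)) : Arrows c s n k := by
  have : Nonempty (Fin c × Fin s) := ⟨(⟨0, hc⟩, ⟨0, hs⟩)⟩
  exact exists_hasMonoK2_of_isRegularOfDegree (hdeg ▸ multiK_isRegularOfDegree c s)
    (by simpa using h)

lemma setRamsey_le_of_arrows {c s n k : ℕ} (hc : 0 < c) (h : Arrows c s n k) :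
    setRamsey s n k ≤ c :=
  Nat.sInf_le ⟨hc, h⟩

lemma sub_one_mul_lt_mul_sub_one_of_le_mul {n k m c t : ℤ} (hn : 1 ≤ n) (hk : 0 ≤ k)
    (hm : 2 ≤ m) (hc : (n - 1) * k ^ 2 + k + 2 * m - 1 ≤ m * c) (ht : k * t = m * (c - 1)) :
    1 < c ∧ 0 < t ∧ (n - 1) * (c * m - 1) < t * (t - 1) := by
  have hA : 0 ≤ (n - 1) * k ^ 2 := by positivity
  have hc1 : 1 < c := by nlinarith
  have hkt : 0 < k * t := by rw [ht]; nlinarith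
  have hk0 : 0 < k := lt_of_le_of_ne hk (by rintro rfl; simp at hkt)
  have ht0 : 0 < t := pos_of_mul_pos_right hkt hk
  refine ⟨hc1, ht0, lt_of_mul_lt_mul_left (a := k ^ 2) ?_ (by positivity)⟩
  -- `X = kt`, `A = (n-1)k²`, `X ≥ A + k + m - 1`: `X (X-k) - A (X+m-1) ≥ (X-A)(m-1) > 0`
  nlinarith

theorem statement14_general (n k m : ℕ) (hn : 1 ≤ n) (hm : 2 ≤ m)
    (hdvd : (k : ℤ) ∣ (m : ℤ) * (⌈(((n : ℚ) - 1) * k ^ 2 + k + 2 * m - 1) / (m : ℚ)⌉ - 1)) :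
    (setRamsey m n k : ℤ) ≤ ⌈(((n : ℚ) - 1) * k ^ 2 + k + 2 * m - 1) / (m : ℚ)⌉ := by
  obtain ⟨c, hc⟩ : ∃ c : ℤ, ⌈(((n : ℚ) - 1) * k ^ 2 + k + 2 * m - 1) / (m : ℚ)⌉ = c :=
    ⟨_, rfl⟩
  rw [hc] at hdvd ⊢
  obtain ⟨t, ht⟩ := hdvd
  have hmc : ((n : ℤ) - 1) * k ^ 2 + k + 2 * m - 1 ≤ m * c := by
    have := hc ▸ Int.le_ceil ((((n : ℚ) - 1) * k ^ 2 + k + 2 * m - 1) / (m : ℚ))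
    rw [div_le_iff₀ (by positivity)] at this
    exact_mod_cast (by linarith : ((n : ℚ) - 1) * k ^ 2 + k + 2 * m - 1 ≤ m * c)
  obtain ⟨hc1, ht0, hlt⟩ := sub_one_mul_lt_mul_sub_one_of_le_mul (by exact_mod_cast hn)
    (Nat.cast_nonneg k) (by exact_mod_cast hm) hmc ht.symm
  lift c to ℕ using by omega
  lift t to ℕ using ht0.le
  have hdeg : (c - 1) * m = k * t := by
    zify [show 1 ≤ c by omega]
    linarith
  exact_mod_cast setRamsey_le_of_arrows (by omega)
    (arrows_of_lt_s14 (by omega) (by omega) hdeg (by linarith))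

/-- **Theorem.** Let `n, k, m` be positive integers with `k ≥ 2` and `m ≥ 2`. If
`m * (⌈((n-1)k² + k + 2m - 1)/m⌉ - 1)` is divisible by `k`, then
`M_m(K_{2,n}; k) ≤ ⌈((n-1)k² + k + 2m - 1)/m⌉`. -/
theorem statement14 (n k m : ℕ) (hn : 1 ≤ n) (hk : 2 ≤ k) (hm : 2 ≤ m)
    (hdvd : (k : ℤ) ∣ (m : ℤ) * (⌈(((n : ℚ) - 1) * k ^ 2 + k + 2 * m - 1) / (m : ℚ)⌉ - 1)) :
    (setRamsey m n k : ℤ) ≤ ⌈(((n : ℚ) - 1) * k ^ 2 + k + 2 * m - 1) / (m : ℚ)⌉ :=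
  statement14_general n k m hn hm hdvd
end
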